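/- arXiv:math/0312524 — 3 statements merged into one kernel-verified Lean document; each statement's English description precedes it below -/
import Mathlib

section
/- Let V be a graded Lie algebra of degree n over a commutative ring R with 2 invertible, and let D be a differential of odd degree k on V. Then the image D(V) is a two-sided ideal of V for the derived bracket ([D(V), V]_{(D)} = 0 and [V, D(V)]_{(D)} ⊆ D(V)), and the derived bracket induces on the quotient graded module V/D(V) a well-defined graded Lie bracket of degree n+k: the induced bracket is graded skew-symmetric and satisfies the graded Jacobi identity. -/
/-- `(-1)^m` as an integer, for `m : ℤ` (depends only on the parity of `m`). -/
def gsign (m : ℤ) : ℤ := (((-1 : ℤˣ) ^ m : ℤˣ) : ℤ)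

lemma gsign_add (a b : ℤ) : gsign (a + b) = gsign a * gsign b := by
  unfold gsign; rw [zpow_add]; exact Units.val_mul _ _

lemma gsign_sq (m : ℤ) : gsign m * gsign m = 1 := by
  unfold gsign; rw [← Units.val_mul, Int.units_mul_self]; rfl

lemma gsign_even {m : ℤ} (h : Even m) : gsign m = 1 := by
  obtain ⟨c, rfl⟩ := h; rw [gsign_add]; exact gsign_sq c

lemma gsign_one : gsign 1 = -1 := by unfold gsign; simp

lemma gsign_odd {m : ℤ} (h : Odd m) : gsign m = -1 := by
  obtain ⟨c, rfl⟩ := h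
  rw [gsign_add, gsign_even ⟨c, two_mul c⟩, gsign_one, one_mul]

lemma gsign_eval (m : ℤ) : gsign m = if m % 2 = 0 then 1 else -1 := by
  rcases Int.even_or_odd m with h | h
  · rw [gsign_even h, if_pos (Int.even_iff.mp h)]
  · rw [gsign_odd h, if_neg (by have := Int.odd_iff.mp h; omega)]

lemma gsign_mul_eval (a b : ℤ) :
    gsign (a * b) = if a % 2 = 0 ∨ b % 2 = 0 then 1 else -1 := by
  rcases Int.even_or_odd a with ha | ha
  · rw [gsign_even (ha.mul_right b), if_pos (Or.inl (Int.even_iff.mp ha))]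
  · rcases Int.even_or_odd b with hb | hb
    · rw [gsign_even (hb.mul_left a), if_pos (Or.inr (Int.even_iff.mp hb))]
    · rw [gsign_odd (ha.mul hb),
        if_neg (by have := Int.odd_iff.mp ha; have := Int.odd_iff.mp hb; omega)]

/-- A graded Lie algebra of degree `n` over a commutative ring `R`: a `ℤ`-graded
`R`-module with an `R`-bilinear bracket sending `V_i × V_j` into `V_{i+j+n}`,
graded skew-symmetric and satisfying the graded Jacobi identity. -/
structure GradedLieAlgebraDeg (R : Type*) [CommRing R] (V : Type*) [AddCommGroup V] [Module R V]
    (n : ℤ) where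
  grade : ℤ → Submodule R V
  bracket : V →ₗ[R] V →ₗ[R] V
  bracket_mem : ∀ i j : ℤ, ∀ a ∈ grade i, ∀ b ∈ grade j, bracket a b ∈ grade (i + j + n)
  skew : ∀ i j : ℤ, ∀ a ∈ grade i, ∀ b ∈ grade j,
    bracket a b = - (gsign ((n + i) * (n + j)) • bracket b a)
  jacobi : ∀ i j l : ℤ, ∀ a ∈ grade i, ∀ b ∈ grade j, ∀ c ∈ grade l,
    bracket a (bracket b c)
      = bracket (bracket a b) c + gsign ((n + i) * (n + j)) • bracket b (bracket a c)

/-- `D` is a differential of odd degree `k` on the graded Lie algebra `L`: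
homogeneous of odd degree `k`, of square zero, and a graded derivation of the bracket. -/
structure GradedLieAlgebraDeg.IsDifferential {R : Type*} [CommRing R] {V : Type*} [AddCommGroup V]
    [Module R V] {n : ℤ} (L : GradedLieAlgebraDeg R V n) (D : V →ₗ[R] V) (k : ℤ) : Prop where
  odd : Odd k
  map_mem : ∀ i : ℤ, ∀ a ∈ L.grade i, D a ∈ L.grade (i + k)
  sq_zero : ∀ a : V, D (D a) = 0
  leibniz : ∀ i j : ℤ, ∀ a ∈ L.grade i, ∀ b ∈ L.grade j,
    D (L.bracket a b) = L.bracket (D a) b + gsign (k * (n + i)) • L.bracket a (D b)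

/-- The derived bracket `[a,b]_{(D)} = (-1)^{n+|a|+1} • [D a, b]`, for `a` homogeneous
of degree `i`. -/
def GradedLieAlgebraDeg.der {R : Type*} [CommRing R] {V : Type*} [AddCommGroup V] [Module R V]
    {n : ℤ} (L : GradedLieAlgebraDeg R V n) (D : V →ₗ[R] V) (i : ℤ) (a b : V) : V :=
  gsign (n + i + 1) • L.bracket (D a) b

/-- The derived bracket `[a,b]_d = [[a,d],b]` by an element `d`. -/
def GradedLieAlgebraDeg.derEl {R : Type*} [CommRing R] {V : Type*} [AddCommGroup V] [Module R V]
    {n : ℤ} (L : GradedLieAlgebraDeg R V n) (d : V) (a b : V) : V :=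
  L.bracket (L.bracket a d) b

/-- the image `D(V)` is a two-sided ideal for the derived bracket
(`[D(V), V]_(D) = 0` and `[V, D(V)]_(D) ⊆ D(V)`), the derived bracket descends to
the quotient `V / D(V)` (well-definedness modulo `D(V)`), and the induced bracket is
graded skew-symmetric and satisfies the graded Jacobi identity modulo `D(V)`,
i.e. it is a graded Lie bracket of degree `n + k` on `V / D(V)`. -/
theorem derived_bracket_descends_to_quotient_by_image {R : Type*} [CommRing R]
    [Invertible (2 : R)] {V : Type*} [AddCommGroup V] [Module R V] {n k : ℤ}
    (L : GradedLieAlgebraDeg R V n) (D : V →ₗ[R] V) (hD : L.IsDifferential D k) :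
    (∀ i j : ℤ, ∀ a ∈ L.grade i, a ∈ LinearMap.range D →
        ∀ b ∈ L.grade j, L.der D i a b = 0) ∧
    (∀ i j : ℤ, ∀ a ∈ L.grade i, ∀ b ∈ L.grade j, b ∈ LinearMap.range D →
        L.der D i a b ∈ LinearMap.range D) ∧
    (∀ i j : ℤ, ∀ a ∈ L.grade i, ∀ a' ∈ L.grade i, ∀ b ∈ L.grade j, ∀ b' ∈ L.grade j,
        a - a' ∈ LinearMap.range D → b - b' ∈ LinearMap.range D →
        L.der D i a b - L.der D i a' b' ∈ LinearMap.range D) ∧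
    (∀ i j : ℤ, ∀ a ∈ L.grade i, ∀ b ∈ L.grade j,
        L.der D i a b + gsign ((n + k + i) * (n + k + j)) • L.der D j b a
          ∈ LinearMap.range D) ∧
    (∀ i j l : ℤ, ∀ a ∈ L.grade i, ∀ b ∈ L.grade j, ∀ c ∈ L.grade l,
        L.der D i a (L.der D j b c)
          - (L.der D (i + j + (n + k)) (L.der D i a b) c
              + gsign ((n + k + i) * (n + k + j)) • L.der D j b (L.der D i a c))
          ∈ LinearMap.range D) := by
  
  have hk' : k % 2 = 1 := Int.odd_iff.mp hD.odd
  have p1 : ∀ i j : ℤ, ∀ a ∈ L.grade i, a ∈ LinearMap.range D →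
      ∀ b ∈ L.grade j, L.der D i a b = 0 := by
    intro i j a _ hra b _
    obtain ⟨x, hx⟩ := hra
    have hda : D a = 0 := by rw [← hx]; exact hD.sq_zero x
    simp [GradedLieAlgebraDeg.der, hda]
  have p2 : ∀ i j : ℤ, ∀ a ∈ L.grade i, ∀ b ∈ L.grade j, b ∈ LinearMap.range D →
      L.der D i a b ∈ LinearMap.range D := by
    intro i j a ha b hb hrb
    obtain ⟨y, hy⟩ := hrb
    have hdb : D b = 0 := by rw [← hy]; exact hD.sq_zero y
    have hl := hD.leibniz i j a ha b hb
    rw [hdb] at hl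
    simp only [map_zero, smul_zero, add_zero] at hl
    exact ⟨gsign (n + i + 1) • L.bracket a b, by
      simp [GradedLieAlgebraDeg.der, map_zsmul, hl]⟩
  have p3 : ∀ i j : ℤ, ∀ a ∈ L.grade i, ∀ a' ∈ L.grade i, ∀ b ∈ L.grade j, ∀ b' ∈ L.grade j,
      a - a' ∈ LinearMap.range D → b - b' ∈ LinearMap.range D →
      L.der D i a b - L.der D i a' b' ∈ LinearMap.range D := by
    intro i j a ha a' ha' b hb b' hb' hra hrb
    have key : L.der D i a b - L.der D i a' b'
        = L.der D i (a - a') b + L.der D i a' (b - b') := by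
      simp only [GradedLieAlgebraDeg.der, map_sub, LinearMap.sub_apply, smul_sub]
      abel
    rw [key, p1 i j (a - a') (Submodule.sub_mem _ ha ha') hra b hb, zero_add]
    exact p2 i j a' ha' (b - b') (Submodule.sub_mem _ hb hb') hrb
  have p4 : ∀ i j : ℤ, ∀ a ∈ L.grade i, ∀ b ∈ L.grade j,
      L.der D i a b + gsign ((n + k + i) * (n + k + j)) • L.der D j b a
        ∈ LinearMap.range D := by
    intro i j a ha b hb
    have hDa := hD.map_mem i a ha
    have h1 := L.skew (i + k) j (D a) hDa b hb
    have h2 := hD.leibniz j i b hb a ha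
    have h3 : gsign (k * (n + j)) • L.bracket b (D a)
        = D (L.bracket b a) - L.bracket (D b) a := by rw [h2]; abel
    have h4 : L.bracket b (D a)
        = gsign (k * (n + j)) • D (L.bracket b a)
          - gsign (k * (n + j)) • L.bracket (D b) a := by
      have h5 := congrArg (fun x => gsign (k * (n + j)) • x) h3
      simpa [smul_smul, gsign_sq, smul_sub] using h5
    refine ⟨-(gsign (n + i + 1) * (gsign ((n + (i + k)) * (n + j)) * gsign (k * (n + j)))) •
        L.bracket b a, ?_⟩
    rw [map_zsmul]
    simp only [GradedLieAlgebraDeg.der]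
    rw [h1, h4]
    match_scalars <;>
      · simp only [gsign_mul_eval]
        simp only [gsign_eval]
        split_ifs <;> first | (exfalso; omega) | norm_num
  refine ⟨p1, p2, p3, p4, ?_⟩
  intro i j l a ha b hb c hc
  have hDa := hD.map_mem i a ha
  have hDb := hD.map_mem j b hb
  have hDDa : D (D a) = 0 := hD.sq_zero a
  have h1 := hD.leibniz (i + k) j (D a) hDa b hb
  rw [hDDa] at h1
  simp only [map_zero, LinearMap.zero_apply, zero_add] at h1
  have h2 := L.jacobi (i + k) (j + k) l (D a) hDa (D b) hDb c hc
  have key : L.der D i a (L.der D j b c)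
      - (L.der D (i + j + (n + k)) (L.der D i a b) c
          + gsign ((n + k + i) * (n + k + j)) • L.der D j b (L.der D i a c)) = 0 := by
    simp only [GradedLieAlgebraDeg.der, map_zsmul, LinearMap.smul_apply]
    rw [h1, h2]
    simp only [map_zsmul, LinearMap.smul_apply, map_add, LinearMap.add_apply]
    match_scalars <;>
      · simp only [gsign_mul_eval]
        simp only [gsign_eval]
        split_ifs <;> first | (exfalso; omega) | norm_num
  rw [key]
  exact (LinearMap.range D).zero_mem
end

section
/- Let V be a graded Lie algebra of degree n over a commutative ring R with 2 invertible, and let D be a differential of odd degree k on V. Then the skew-symmetrization of the derived bracket, [a,b]_{(D)}^- := (1/2)([a,b]_{(D)} - (-1)^{(n+k+|a|)(n+k+|b|)}[b,a]_{(D)}), is given by the formula [a,b]_{(D)}^- = (1/2)([a,Db] - (-1)^{n+|a|}[Da,b]) for all homogeneous a,b ∈ V. -/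

lemma gsign_eq_negOnePow (m : ℤ) : gsign m = (m.negOnePow : ℤ) := rfl

lemma gsign_mul_gsign (a b : ℤ) : gsign a * gsign b = gsign (a + b) := by
  simp [gsign_eq_negOnePow, Int.negOnePow_add]

lemma gsign_succ (m : ℤ) : gsign (m + 1) = -gsign m := by
  simp [gsign_eq_negOnePow, Int.negOnePow_succ]

/-- the skew-symmetrization of the derived bracket,
`[a,b]⁻ = (1/2)([a,b]_(D) - (-1)^((n+k+|a|)(n+k+|b|)) [b,a]_(D))`, is given by
`[a,b]⁻ = (1/2)([a, D b] - (-1)^(n+|a|) [D a, b])` for homogeneous `a, b`. -/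
theorem skew_symmetrization_of_derived_bracket {R : Type*} [CommRing R]
    [Invertible (2 : R)] {V : Type*} [AddCommGroup V] [Module R V] {n k : ℤ}
    (L : GradedLieAlgebraDeg R V n) (D : V →ₗ[R] V) (hD : L.IsDifferential D k) :
    ∀ i j : ℤ, ∀ a ∈ L.grade i, ∀ b ∈ L.grade j,
      (⅟(2 : R)) • (L.der D i a b - gsign ((n + k + i) * (n + k + j)) • L.der D j b a)
        = (⅟(2 : R)) • (L.bracket a (D b) - gsign (n + i) • L.bracket (D a) b) := by
  intro i j a ha b hb
  have hDb : D b ∈ L.grade (j + k) := hD.map_mem j b hb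
  have hskew := L.skew (j + k) i (D b) hDb a ha
  have key : gsign ((n + k + i) * (n + k + j)) * (gsign (n + j + 1) *
      gsign ((n + (j + k)) * (n + i))) = 1 := by
    rw [gsign_mul_gsign, gsign_mul_gsign]
    apply gsign_even
    obtain ⟨t, ht⟩ := hD.odd
    subst ht
    exact ⟨(n + j + 2 * t + 1) * ((n + i) + t + 1) - t, by ring⟩
  simp only [GradedLieAlgebraDeg.der, hskew, smul_neg, smul_smul, sub_neg_eq_add]
  rw [show gsign (n + i + 1) = -gsign (n + i) from gsign_succ _, neg_smul, key, one_smul,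
    neg_add_eq_sub]
end

section
/- (Gel'fand–Daletskii–Tsygan) Let V be a graded Lie algebra of degree n over a commutative ring R with 2 invertible, let 𝔄 ⊆ V be a graded abelian subalgebra ([𝔄,𝔄] = 0), and let d ∈ V be homogeneous with n+|d| odd and [d,d] = 0, such that [[𝔄,d],𝔄] ⊆ 𝔄. Then the bracket [a,b]_d = [[a,d],b] is a graded Lie bracket of degree n+|d|+n on 𝔄 (graded skew-symmetric and satisfying the graded Jacobi identity), and the map a ↦ [a,d] is a morphism of graded Lie algebras from (𝔄, [·,·]_d) into (V, [·,·]): [[a,b]_d, d] = [[a,d],[b,d]] for all a,b ∈ 𝔄. -/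
lemma gsign_congr {a b : ℤ} (h : Even (a - b)) : gsign a = gsign b := by
  have ha : a = (a - b) + b := by ring
  rw [ha, gsign_add, gsign_even h, one_mul]

/-- Gel'fand–Daletskii–Tsygan: if `𝔄` is a graded abelian subalgebra
(with graded pieces `A i ≤ L.grade i`, `[𝔄,𝔄] = 0`) and `d` is homogeneous with
`n + |d|` odd, `[d,d] = 0` and `[[𝔄,d],𝔄] ⊆ 𝔄`, then `[a,b]_d = [[a,d],b]` is a graded
Lie bracket of degree `n + |d| + n` on `𝔄` (skew-symmetric, satisfying the graded
Jacobi identity), and `a ↦ [a,d]` is a morphism of graded Lie algebras from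
`(𝔄, [·,·]_d)` into `(V, [·,·])`. -/
theorem gelfand_daletskii_tsygan {R : Type*} [CommRing R] [Invertible (2 : R)]
    {V : Type*} [AddCommGroup V] [Module R V] {n : ℤ}
    (L : GradedLieAlgebraDeg R V n)
    (A : ℤ → Submodule R V) (hle : ∀ i : ℤ, A i ≤ L.grade i)
    (habelian : ∀ i j : ℤ, ∀ a ∈ A i, ∀ b ∈ A j, L.bracket a b = 0)
    (d : V) (dd : ℤ) (hd : d ∈ L.grade dd) (hodd : Odd (n + dd))
    (hdd : L.bracket d d = 0)
    (hclosed : ∀ i j : ℤ, ∀ a ∈ A i, ∀ b ∈ A j,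
        L.derEl d a b ∈ A (i + j + (n + dd + n))) :
    (∀ i j : ℤ, ∀ a ∈ A i, ∀ b ∈ A j,
        L.derEl d a b
          = - (gsign ((n + (dd + n) + i) * (n + (dd + n) + j)) • L.derEl d b a)) ∧
    (∀ i j l : ℤ, ∀ a ∈ A i, ∀ b ∈ A j, ∀ c ∈ A l,
        L.derEl d a (L.derEl d b c)
          = L.derEl d (L.derEl d a b) c
            + gsign ((n + (dd + n) + i) * (n + (dd + n) + j)) •
                L.derEl d b (L.derEl d a c)) ∧
    (∀ i j : ℤ, ∀ a ∈ A i, ∀ b ∈ A j,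
        L.bracket (L.derEl d a b) d = L.bracket (L.bracket a d) (L.bracket b d)) := by
  obtain ⟨m, hm⟩ := hodd
  -- square-zero of a ↦ [a,d] on homogeneous elements
  have hDD : ∀ i : ℤ, ∀ x ∈ L.grade i, L.bracket (L.bracket x d) d = 0 := by
    intro i x hx
    have hj := L.jacobi i dd dd x hx d hd d hd
    rw [hdd] at hj
    simp only [map_zero, LinearMap.zero_apply] at hj
    have hs := L.skew dd (i + dd + n) d hd (L.bracket x d) (L.bracket_mem i dd x hx d hd)
    rw [hs] at hj
    have hOdd : Odd ((n + i) * (n + dd) + (n + dd) * (n + (i + dd + n))) := by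
      refine ⟨(2 * m + 1) * (n + i + m) + m, ?_⟩
      linear_combination (2 * n + 2 * i + (n + dd) + 2 * m + 1) * hm
    have hg : gsign ((n + i) * (n + dd)) * gsign ((n + dd) * (n + (i + dd + n))) = -1 := by
      rw [← gsign_add, gsign_odd hOdd]
    set v := L.bracket (L.bracket x d) d with hv
    have hj2 : (0 : V) = v + v := by
      calc (0 : V) = v + gsign ((n + i) * (n + dd)) •
            -(gsign ((n + dd) * (n + (i + dd + n))) • v) := hj
        _ = v + (gsign ((n + i) * (n + dd)) * gsign ((n + dd) * (n + (i + dd + n)))) • -v := by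
            rw [smul_neg, smul_neg, smul_smul]
        _ = v + v := by rw [hg, neg_smul, one_smul, neg_neg]
    have h2 : (2 : R) • v = 0 := by rw [two_smul]; exact hj2.symm
    calc v = (⅟(2 : R) * 2) • v := by rw [invOf_mul_self, one_smul]
      _ = ⅟(2 : R) • ((2 : R) • v) := by rw [mul_smul]
      _ = 0 := by rw [h2, smul_zero]
  -- Part 3 : morphism property
  have part3 : ∀ i j : ℤ, ∀ a ∈ A i, ∀ b ∈ A j,
      L.bracket (L.derEl d a b) d = L.bracket (L.bracket a d) (L.bracket b d) := by
    intro i j a ha b hb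
    have hj := L.jacobi (i + dd + n) j dd (L.bracket a d)
      (L.bracket_mem i dd a (hle i ha) d hd) b (hle j hb) d hd
    rw [hDD i a (hle i ha)] at hj
    simp only [map_zero, smul_zero, add_zero] at hj
    simp only [GradedLieAlgebraDeg.derEl]
    exact hj.symm
  refine ⟨?_, ?_, part3⟩
  · -- skew-symmetry
    intro i j a ha b hb
    have hab : L.bracket a b = 0 := habelian i j a ha b hb
    have hj := L.jacobi i dd j a (hle i ha) d hd b (hle j hb)
    rw [hab] at hj
    simp only [map_zero, smul_zero, add_zero] at hj
    -- hj : [a,[d,b]] = [[a,d],b]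
    have hs1 := L.skew dd j d hd b (hle j hb)
    have hs2 := L.skew i (j + dd + n) a (hle i ha) (L.bracket b d)
      (L.bracket_mem j dd b (hle j hb) d hd)
    have hpar : Even ((n + dd) * (n + j) + (n + i) * (n + (j + dd + n))
        - ((n + (dd + n) + i) * (n + (dd + n) + j) + 1)) := by
      refine ⟨-(2 * m ^ 2 + 2 * m + 1), ?_⟩
      linear_combination (-(n + dd + 2 * m + 1)) * hm
    simp only [GradedLieAlgebraDeg.derEl]
    calc L.bracket (L.bracket a d) b = L.bracket a (L.bracket d b) := hj.symm
      _ = L.bracket a (-(gsign ((n + dd) * (n + j)) • L.bracket b d)) := by rw [← hs1]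
      _ = -(gsign ((n + dd) * (n + j)) • L.bracket a (L.bracket b d)) := by
          rw [map_neg, map_zsmul]
      _ = -(gsign ((n + dd) * (n + j)) •
            -(gsign ((n + i) * (n + (j + dd + n))) • L.bracket (L.bracket b d) a)) := by
          rw [← hs2]
      _ = (gsign ((n + dd) * (n + j)) * gsign ((n + i) * (n + (j + dd + n)))) •
            L.bracket (L.bracket b d) a := by
          rw [smul_neg, neg_neg, smul_smul]
      _ = gsign ((n + (dd + n) + i) * (n + (dd + n) + j) + 1) •
            L.bracket (L.bracket b d) a := by
          rw [← gsign_add, gsign_congr hpar]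
      _ = -(gsign ((n + (dd + n) + i) * (n + (dd + n) + j)) •
            L.bracket (L.bracket b d) a) := by
          rw [gsign_add, gsign_one, mul_neg, mul_one, neg_smul]
  · -- Jacobi identity
    intro i j l a ha b hb c hc
    have hj := L.jacobi (i + dd + n) (j + dd + n) l (L.bracket a d)
      (L.bracket_mem i dd a (hle i ha) d hd) (L.bracket b d)
      (L.bracket_mem j dd b (hle j hb) d hd) c (hle l hc)
    rw [← part3 i j a ha b hb] at hj
    rw [show (n + (i + dd + n)) * (n + (j + dd + n))
        = (n + (dd + n) + i) * (n + (dd + n) + j) from by ring] at hj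
    simp only [GradedLieAlgebraDeg.derEl] at hj ⊢
    exact hj
end
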